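/- arXiv:cond-mat/0408681 — 3 statements merged into one kernel-verified Lean document; each statement's English description precedes it below -/
import Mathlib

section
/- Let f : ℝ^σ → ℝ ∪ {-∞} have convex effective domain, be strictly concave on the relative interior of dom f, and be continuous on dom f. Then f has a strictly supporting hyperplane at every u ∈ dom f except possibly relative boundary points: for each u in the relative interior of dom f there exists β ∈ ℝ^σ such that f(v) < f(u) + ⟨β, v-u⟩ for all v ≠ u. -/
/-!
Write `g` for the real-valued function `f` on `D = dom f`. Separating `(u, g u)` from the open
convex strict hypograph of `g ∘ p`, where `p` is the orthogonal projection onto the affine span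
of `D`, yields a supergradient `β` at `u`: `g ≤ g u + ⟪β, · - u⟫` on the relative interior.
Then `u` maximises the strictly concave function `g - ⟪β, ·⟫` on the relative interior. Since a
concave function decreases along every segment leaving its maximiser, this maximum is strict,
and by continuity it stays strict up to the relative boundary. Outside `D`, `f = ⊥`.
-/

open Set Filter Topology AffineMap

open scoped RealInnerProductSpace

theorem mem_intrinsicInterior_iff_eventually {𝕜 V P : Type*} [Ring 𝕜] [AddCommGroup V]
    [Module 𝕜 V] [TopologicalSpace P] [AddTorsor V P] {s : Set P} {x : P} :
    x ∈ intrinsicInterior 𝕜 s ↔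
      x ∈ affineSpan 𝕜 s ∧ ∀ᶠ y in 𝓝 x, y ∈ affineSpan 𝕜 s → y ∈ s := by
  simp only [mem_intrinsicInterior, mem_interior_iff_mem_nhds, ← eventually_mem_set]
  constructor
  · rintro ⟨y, hy, rfl⟩
    exact ⟨y.2, eventually_nhdsWithin_iff.1 ((eventually_nhds_subtype_iff _ y (· ∈ s)).1 hy)⟩
  · rintro ⟨hx, hs⟩
    exact ⟨⟨x, hx⟩, (eventually_nhds_subtype_iff _ _ (· ∈ s)).2
      (eventually_nhdsWithin_iff.2 hs), rfl⟩

section TopologicalVectorSpace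

variable {E : Type*} [AddCommGroup E] [Module ℝ E] [TopologicalSpace E]
  [IsTopologicalAddGroup E] [ContinuousSMul ℝ E]

theorem Convex.combo_intrinsicInterior_self_mem_intrinsicInterior {s : Set E} (hs : Convex ℝ s)
    {x y : E} (hx : x ∈ intrinsicInterior ℝ s) (hy : y ∈ s) {a b : ℝ} (ha : 0 < a) (hb : 0 ≤ b)
    (hab : a + b = 1) : a • x + b • y ∈ intrinsicInterior ℝ s := by
  obtain rfl : b = 1 - a := by linarith
  have hxs := intrinsicInterior_subset hx
  rw [mem_intrinsicInterior_iff_eventually] at hx ⊢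
  refine ⟨subset_affineSpan ℝ s (hs hxs hy ha.le hb hab), ?_⟩
  -- the homothety with centre `y` and ratio `a⁻¹` sends `a • x + (1 - a) • y` back to `x`
  -- and maps the affine span into itself
  set h : E → E := fun w => a⁻¹ • (w - y) + y
  have hh : h (a • x + (1 - a) • y) = x := by
    simp only [h]
    match_scalars <;> field_simp
    ring
  have htendsto : Tendsto h (𝓝 (a • x + (1 - a) • y)) (𝓝 x) := by
    simpa only [hh] using (by fun_prop : Continuous h).tendsto (a • x + (1 - a) • y)
  filter_upwards [htendsto.eventually hx.2] with w hw hwA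
  have hhw : w = a • h w + (1 - a) • y := by
    simp only [h]
    match_scalars <;> field_simp
    ring
  have hyA := subset_affineSpan ℝ s hy
  rw [hhw]
  exact hs (hw (AffineSubspace.smul_vsub_vadd_mem _ _ hwA hyA hyA)) hy ha.le hb hab

theorem Convex.intrinsicInterior {s : Set E} (hs : Convex ℝ s) :
    Convex ℝ (intrinsicInterior ℝ s) :=
  convex_iff_forall_pos.2 fun _ hx _ hy _ _ ha hb hab =>
    hs.combo_intrinsicInterior_self_mem_intrinsicInterior hx (intrinsicInterior_subset hy) ha
      hb.le hab

theorem StrictConcaveOn.lt_of_isMaxOn_intrinsicInterior {D : Set E} {ψ : E → ℝ} {u v : E}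
    (hD : Convex ℝ D) (hψ : StrictConcaveOn ℝ (intrinsicInterior ℝ D) ψ)
    (hcont : ContinuousOn ψ D) (hu : u ∈ intrinsicInterior ℝ D)
    (hmax : IsMaxOn ψ (intrinsicInterior ℝ D) u) (hv : v ∈ D) (hvu : v ≠ u) : ψ v < ψ u := by
  have hseg : ∀ t ∈ Ico (0 : ℝ) 1, lineMap u v t ∈ intrinsicInterior ℝ D := fun t ht => by
    rw [lineMap_apply_module]
    exact hD.combo_intrinsicInterior_self_mem_intrinsicInterior hu hv (by linarith [ht.2]) ht.1
      (by ring)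
  set m := lineMap u v (1 / 2 : ℝ)
  have hm : m ∈ intrinsicInterior ℝ D := hseg _ ⟨by norm_num, by norm_num⟩
  have hmu : ψ m < ψ u := by
    have hne : u ≠ m := fun h => by simp [m, eq_comm (a := u), hvu] at h
    have hhalf : (0 : ℝ) < 1 / 2 := by norm_num
    have hlt := hψ.2 hu hm hne hhalf hhalf (by norm_num)
    have hle : ψ _ ≤ ψ u := hmax (hψ.1 hu hm hhalf.le hhalf.le (by norm_num))
    rw [smul_eq_mul, smul_eq_mul] at hlt
    linarith
  -- a concave function decreases along every segment leaving its maximizer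
  have hle : ∀ t ∈ Ico (1 / 2 : ℝ) 1, ψ (lineMap u v t) ≤ ψ m := by
    intro t ht
    have hxt := hseg t ⟨by linarith [ht.1], ht.2⟩
    have hmseg : m ∈ segment ℝ u (lineMap u v t) := by
      have : m = lineMap u (lineMap u v t) (2 * t)⁻¹ := by
        rw [lineMap_lineMap_right, show m = lineMap u v (1 / 2 : ℝ) from rfl]
        congr 1
        field_simp [show t ≠ 0 by linarith [ht.1]]
      rw [this]
      exact lineMap_mem_segment ℝ _ _
        ⟨inv_nonneg.2 (by linarith [ht.1]), inv_le_one_of_one_le₀ (by linarith [ht.1])⟩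
    have := hψ.concaveOn.min_le_of_mem_segment hu hxt hmseg
    rwa [min_eq_right (hmax hxt)] at this
  have hvm : ψ v ≤ ψ m := by
    have hcl : (1 : ℝ) ∈ closure (Ico (1 / 2 : ℝ) 1) := by
      rw [closure_Ico (by norm_num)]
      norm_num
    have hcw : ContinuousWithinAt (ψ ∘ lineMap u v) (Ico (1 / 2 : ℝ) 1) 1 := by
      refine ContinuousWithinAt.comp (t := D) ?_ lineMap_continuous.continuousWithinAt
        fun t ht => intrinsicInterior_subset (hseg t ⟨by linarith [ht.1], ht.2⟩)
      simpa using hcont v hv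
    simpa using hcw.closure_le hcl continuousWithinAt_const hle
  linarith

theorem ContinuousOn.isOpen_strict_hypograph {X : Type*} [TopologicalSpace X] {U : Set X}
    {g : X → ℝ} (hU : IsOpen U) (hg : ContinuousOn g U) :
    IsOpen {q : X × ℝ | q.1 ∈ U ∧ q.2 < g q.1} := by
  have hcont : ContinuousOn (fun q : X × ℝ => g q.1 - q.2) (Prod.fst ⁻¹' U) :=
    (hg.comp continuousOn_fst fun _ hq => hq).sub continuousOn_snd
  convert hcont.isOpen_inter_preimage (hU.preimage continuous_fst) (isOpen_Ioi (a := 0)) using 1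
  ext q
  simp [sub_pos]

theorem ConcaveOn.exists_le_add_of_isOpen [LocallyConvexSpace ℝ E] {U : Set E} {g : E → ℝ}
    (hU : IsOpen U) (hg : ConcaveOn ℝ U g) (hcont : ContinuousOn g U) {u : E} (hu : u ∈ U) :
    ∃ ℓ : StrongDual ℝ E, ∀ x ∈ U, g x ≤ g u + ℓ (x - u) := by
  have hS : (u, g u) ∉ {q : E × ℝ | q.1 ∈ U ∧ q.2 < g q.1} := fun h => lt_irrefl _ h.2
  obtain ⟨φ, hφ⟩ := geometric_hahn_banach_open_point hg.convex_strict_hypograph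
    (hcont.isOpen_strict_hypograph hU) hS
  have hsplit : ∀ x t, φ (x, t) = φ (x, 0) + t * φ (0, 1) := by
    intro x t
    rw [show ((x, t) : E × ℝ) = (x, 0) + t • (0, 1) by simp, map_add, map_smul, smul_eq_mul]
  have ha : 0 < φ (0, 1) := by
    have := hφ (u, g u - 1) ⟨hu, by linarith⟩
    rw [hsplit u (g u - 1), hsplit u (g u)] at this
    linarith
  refine ⟨-(φ (0, 1))⁻¹ • φ.comp (ContinuousLinearMap.inl ℝ E ℝ),
    fun x hx => le_of_forall_lt fun t ht => ?_⟩
  have := hφ (x, t) ⟨hx, ht⟩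
  rw [hsplit x t, hsplit u (g u)] at this
  have hsub : φ (x - u, 0) = φ (x, 0) - φ (u, 0) := by
    rw [← map_sub]
    simp
  simp only [FunLike.coe_smul, ContinuousLinearMap.coe_comp, Pi.smul_apply,
    Function.comp_apply, ContinuousLinearMap.inl_apply, hsub, smul_eq_mul]
  field_simp
  linarith

end TopologicalVectorSpace

section InnerProductSpace

variable {E : Type*} [NormedAddCommGroup E] [InnerProductSpace ℝ E] [FiniteDimensional ℝ E]

theorem ConcaveOn.exists_le_add_inner_of_mem_intrinsicInterior {D : Set E} {g : E → ℝ}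
    (hg : ConcaveOn ℝ (intrinsicInterior ℝ D) g)
    (hcont : ContinuousOn g (intrinsicInterior ℝ D)) {u : E} (hu : u ∈ intrinsicInterior ℝ D) :
    ∃ β : E, ∀ w ∈ intrinsicInterior ℝ D, g w ≤ g u + ⟪β, w - u⟫ := by
  have : Nonempty (affineSpan ℝ D) :=
    ⟨⟨u, subset_affineSpan ℝ D (intrinsicInterior_subset hu)⟩⟩
  -- precomposing with the orthogonal projection onto the affine span turns the relative
  -- interior into an open set
  set p : E →ᴬ[ℝ] E :=
    (affineSpan ℝ D).subtypeA.comp (EuclideanGeometry.orthogonalProjection (affineSpan ℝ D))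
  have hp : ∀ w ∈ intrinsicInterior ℝ D, p w = w := fun w hw =>
    congrArg Subtype.val (EuclideanGeometry.orthogonalProjection_mem_subspace_eq_self
      ⟨w, subset_affineSpan ℝ D (intrinsicInterior_subset hw)⟩)
  have hmem : ∀ w ∈ intrinsicInterior ℝ D, w ∈ p ⁻¹' intrinsicInterior ℝ D := fun w hw => by
    rwa [mem_preimage, hp w hw]
  have hU : IsOpen (p ⁻¹' intrinsicInterior ℝ D) := by
    change IsOpen (EuclideanGeometry.orthogonalProjection (affineSpan ℝ D) ⁻¹'
      (Subtype.val ⁻¹' (Subtype.val '' interior (Subtype.val ⁻¹' D))))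
    rw [Subtype.val_injective.preimage_image]
    exact isOpen_interior.preimage (EuclideanGeometry.orthogonalProjection _).continuous
  obtain ⟨ℓ, hℓ⟩ := (hg.comp_affineMap p.toAffineMap).exists_le_add_of_isOpen hU
    (hcont.comp p.continuous.continuousOn fun _ hx => hx) (hmem u hu)
  refine ⟨(InnerProductSpace.toDual ℝ E).symm ℓ, fun w hw => ?_⟩
  have := hℓ w (hmem w hw)
  simpa [InnerProductSpace.toDual_symm_apply, hp w hw, hp u hu] using this

theorem StrictConcaveOn.exists_lt_add_inner_of_mem_intrinsicInterior {D : Set E} {g : E → ℝ}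
    (hD : Convex ℝ D) (hg : StrictConcaveOn ℝ (intrinsicInterior ℝ D) g)
    (hcont : ContinuousOn g D) {u : E} (hu : u ∈ intrinsicInterior ℝ D) :
    ∃ β : E, ∀ v ∈ D, v ≠ u → g v < g u + ⟪β, v - u⟫ := by
  obtain ⟨β, hβ⟩ := hg.concaveOn.exists_le_add_inner_of_mem_intrinsicInterior
    (hcont.mono intrinsicInterior_subset) hu
  have hψ : StrictConcaveOn ℝ (intrinsicInterior ℝ D) fun w => g w - ⟪β, w⟫ :=
    hg.sub_convexOn ((innerₛₗ ℝ β).convexOn hg.1)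
  have hmax : IsMaxOn (fun w => g w - ⟪β, w⟫) (intrinsicInterior ℝ D) u := fun w hw => by
    have := hβ w hw
    rw [inner_sub_right] at this
    change g w - ⟪β, w⟫ ≤ g u - ⟪β, u⟫
    linarith
  refine ⟨β, fun v hv hvu => ?_⟩
  have := hψ.lt_of_isMaxOn_intrinsicInterior hD (by fun_prop) hu hmax hv hvu
  rw [inner_sub_right]
  linarith

end InnerProductSpace

/-- if `dom f` is convex, `f` is strictly concave on the relative
interior of `dom f` and continuous on `dom f`, then `f` has a strictly supporting
hyperplane at every point of the relative interior of `dom f`. -/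
theorem strictly_supporting_hyperplane_of_strictly_concave
    (σ : ℕ) (f : EuclideanSpace ℝ (Fin σ) → EReal)
    (htop : ∀ w, f w ≠ ⊤)
    (hconv : Convex ℝ {w | f w ≠ ⊥})
    (hstrict : ∀ u ∈ intrinsicInterior ℝ {w | f w ≠ ⊥},
      ∀ v ∈ intrinsicInterior ℝ {w | f w ≠ ⊥}, u ≠ v → ∀ l : ℝ, 0 < l → l < 1 →
        ((l : ℝ) : EReal) * f u + ((1 - l : ℝ) : EReal) * f v < f (l • u + (1 - l) • v))
    (hcont : ContinuousOn f {w | f w ≠ ⊥}) :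
    ∀ u ∈ intrinsicInterior ℝ {w | f w ≠ ⊥},
      ∃ β : EuclideanSpace ℝ (Fin σ), ∀ v, v ≠ u →
        f v < f u + ((⟪β, v - u⟫ : ℝ) : EReal) := by
  set D := {w | f w ≠ ⊥}
  have hf : ∀ w ∈ D, ((f w).toReal : EReal) = f w := fun w hw => EReal.coe_toReal (htop w) hw
  have hgcont : ContinuousOn (fun w => (f w).toReal) D := fun w hw =>
    (EReal.tendsto_toReal (htop w) hw).comp (hcont w hw)
  have hgstrict : StrictConcaveOn ℝ (intrinsicInterior ℝ D) fun w => (f w).toReal := by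
    refine ⟨hconv.intrinsicInterior, fun x hx y hy hxy a b ha hb hab => ?_⟩
    obtain rfl : b = 1 - a := by linarith
    have hmem := hconv.intrinsicInterior hx hy ha.le hb.le hab
    have := hstrict x hx y hy hxy a ha (by linarith)
    rw [← hf x (intrinsicInterior_subset hx), ← hf y (intrinsicInterior_subset hy),
      ← hf _ (intrinsicInterior_subset hmem)] at this
    exact_mod_cast this
  intro u hu
  obtain ⟨β, hβ⟩ := hgstrict.exists_lt_add_inner_of_mem_intrinsicInterior hconv hgcont hu
  refine ⟨β, fun v hvu => ?_⟩
  rw [← hf u (intrinsicInterior_subset hu)]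
  by_cases hv : v ∈ D
  · rw [← hf v hv]
    exact_mod_cast hβ v hv hvu
  · rw [not_ne_iff.1 hv]
    exact EReal.bot_lt_coe _
end

section
/- Let f : ℝ^σ → ℝ ∪ {-∞}, not identically -∞. For u in the relative interior of dom f: f has no supporting hyperplane at u if and only if f is not concave at u, i.e., f(u) < f**(u) fails to hold as equality. -/
open scoped RealInnerProductSpace

/-!
`f**(u) = ⨅ β, h β` for `h = majorantHeight f u`, the value at `u` of the least affine majorant
of `f` with slope `β`, and a supporting hyperplane at `u` is a slope with `h β ≤ f u`. So the
point is that `h` attains its infimum. It is lower semicontinuous and depends only on the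
projection of `β` onto the direction `V` of the affine hull of `dom f`. As `u` is a relative
interior point, `f` is finite at `u ± t bᵢ` for an orthonormal basis `bᵢ` of `V` and small `t`,
which bounds the sublevel sets of `h` within `V`; a lower semicontinuous function attains its
minimum on such a compact set.
-/

/-- The concave Legendre-Fenchel transform `f*(β) = inf_u {⟨β,u⟩ - f(u)}`. -/
noncomputable def concDual {σ : ℕ} (f : EuclideanSpace ℝ (Fin σ) → EReal)
    (β : EuclideanSpace ℝ (Fin σ)) : EReal :=
  ⨅ w : EuclideanSpace ℝ (Fin σ), ((⟪β, w⟫ : ℝ) : EReal) - f w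

/-- The double concave Legendre-Fenchel transform. -/
noncomputable def concBidual {σ : ℕ} (f : EuclideanSpace ℝ (Fin σ) → EReal)
    (u : EuclideanSpace ℝ (Fin σ)) : EReal :=
  ⨅ β : EuclideanSpace ℝ (Fin σ), ((⟪β, u⟫ : ℝ) : EReal) - concDual f β

namespace EReal

lemma coe_sub_iInf {ι : Sort*} (a : ℝ) (g : ι → EReal) :
    (a : EReal) - ⨅ i, g i = ⨆ i, ((a : EReal) - g i) := by
  refine Antitone.map_iInf_of_continuousAt (f := fun x ↦ (a : EReal) - x) ?_
    (fun _ _ hxy ↦ sub_le_sub le_rfl hxy) (sub_top _)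
  exact (continuousAt_add (.inl (coe_ne_top a)) (.inl (coe_ne_bot a))).comp
    (continuousAt_const.prodMk continuous_neg.continuousAt)

lemma continuous_sub_coe (x : EReal) : Continuous fun r : ℝ ↦ x - r := by
  refine continuous_iff_continuousAt.2 fun r ↦ ?_
  simp_rw [sub_eq_add_neg, ← coe_neg]
  exact (continuousAt_add (.inr (coe_ne_bot _)) (.inr (coe_ne_top _))).comp
    (continuousAt_const.prodMk (continuous_coe_real_ereal.comp continuous_neg).continuousAt)

lemma coe_sub_sub_of_ne_top {x : EReal} (hx : x ≠ ⊤) (a b : ℝ) :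
    (a : EReal) - (b - x) = x - ↑(b - a) := by
  induction x using EReal.rec with
  | bot => simp
  | coe r => norm_cast; ring
  | top => exact absurd rfl hx

end EReal

theorem LowerSemicontinuous.exists_forall_le_of_isCompact {α β : Type*} [TopologicalSpace α]
    [LinearOrder β] {g : α → β} (hg : LowerSemicontinuous g) {K : Set α} (hK : IsCompact K)
    {c : β} (hc : ∃ x, g x < c) (hsub : ∀ x, g x < c → ∃ y ∈ K, g y ≤ g x) :
    ∃ x, ∀ y, g x ≤ g y := by
  obtain ⟨x₁, hx₁⟩ := hc
  obtain ⟨y₁, hy₁K, hy₁⟩ := hsub x₁ hx₁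
  obtain ⟨x₀, hx₀K, hx₀⟩ := hg.lowerSemicontinuousOn K |>.exists_isMinOn ⟨y₁, hy₁K⟩ hK
  refine ⟨x₀, fun y ↦ ?_⟩
  rcases lt_or_ge (g y) c with hy | hy
  · obtain ⟨z, hzK, hz⟩ := hsub y hy
    exact (hx₀ hzK).trans hz
  · exact ((hx₀ hy₁K).trans hy₁).trans (hx₁.trans_le hy).le

theorem exists_forall_add_mem_of_mem_intrinsicInterior {E : Type*} [NormedAddCommGroup E]
    [NormedSpace ℝ E] {s : Set E} {u : E} (hu : u ∈ intrinsicInterior ℝ s) :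
    ∃ ε > 0, ∀ z ∈ (affineSpan ℝ s).direction, ‖z‖ < ε → u + z ∈ s := by
  obtain ⟨y, hy, rfl⟩ := hu
  obtain ⟨ε, hε, hball⟩ := Metric.mem_nhds_iff.mp (mem_interior_iff_mem_nhds.mp hy)
  refine ⟨ε, hε, fun z hz hzε ↦ ?_⟩
  have hmem : (y : E) + z ∈ affineSpan ℝ s := by
    simpa [vadd_eq_add, add_comm] using AffineSubspace.vadd_mem_of_mem_direction hz y.2
  exact hball (show (⟨_, hmem⟩ : affineSpan ℝ s) ∈ Metric.ball y ε by
    simpa [Metric.mem_ball, Subtype.dist_eq, dist_eq_norm] using hzε)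

theorem OrthonormalBasis.norm_le_sum_abs_inner {ι F : Type*} [Fintype ι] [NormedAddCommGroup F]
    [InnerProductSpace ℝ F] (b : OrthonormalBasis ι ℝ F) (x : F) :
    ‖x‖ ≤ ∑ i, |⟪b i, x⟫| :=
  calc ‖x‖ = ‖∑ i, ⟪b i, x⟫ • b i‖ := by rw [b.sum_repr']
    _ ≤ ∑ i, ‖⟪b i, x⟫ • b i‖ := norm_sum_le _ _
    _ = ∑ i, |⟪b i, x⟫| := by simp [norm_smul, b.orthonormal.1]

section MajorantHeight

variable {E : Type*} [NormedAddCommGroup E] [InnerProductSpace ℝ E]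

noncomputable def majorantHeight (f : E → EReal) (u β : E) : EReal :=
  ⨆ w, f w - ↑⟪β, w - u⟫

variable {f : E → EReal} {u β : E}

theorem majorantHeight_le_iff {c : EReal} :
    majorantHeight f u β ≤ c ↔ ∀ v, f v ≤ c + ↑⟪β, v - u⟫ := by
  refine iSup_le_iff.trans (forall_congr' fun v ↦ ?_)
  exact EReal.sub_le_iff_le_add (.inl (EReal.coe_ne_bot _)) (.inl (EReal.coe_ne_top _))

theorem lowerSemicontinuous_majorantHeight : LowerSemicontinuous (majorantHeight f u) :=
  lowerSemicontinuous_iSup fun w ↦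
    ((f w).continuous_sub_coe.comp (continuous_id.inner continuous_const)).lowerSemicontinuous

theorem majorantHeight_starProjection (V : Submodule ℝ E) [V.HasOrthogonalProjection]
    (hV : ∀ w, f w ≠ ⊥ → w - u ∈ V) (β : E) :
    majorantHeight f u (V.starProjection β) = majorantHeight f u β := by
  refine iSup_congr fun w ↦ ?_
  by_cases hw : f w = ⊥
  · simp [hw]
  · rw [V.inner_starProjection_left_eq_right, V.starProjection_eq_self_iff.mpr (hV w hw)]

theorem mul_abs_inner_le_of_majorantHeight_le {c t : ℝ} (hβ : majorantHeight f u β ≤ c) {z : E}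
    (hp : f (u + t • z) ≠ ⊥) (hm : f (u - t • z) ≠ ⊥) :
    t * |⟪β, z⟫| ≤ c - min (f (u + t • z)).toReal (f (u - t • z)).toReal := by
  have hline : ∀ s : ℝ, f (u + s • z) ≠ ⊥ → (f (u + s • z)).toReal ≤ c + s * ⟪β, z⟫ := by
    intro s hs
    have h := majorantHeight_le_iff.1 hβ (u + s • z)
    rw [add_sub_cancel_left, inner_smul_right, ← EReal.coe_add] at h
    exact EReal.toReal_le_toReal h hs (EReal.coe_ne_top _)
  have hright := hline t hp
  have hleft := hline (-t) (by rwa [neg_smul, ← sub_eq_add_neg])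
  rw [neg_smul, ← sub_eq_add_neg] at hleft
  have := min_le_left (f (u + t • z)).toReal (f (u - t • z)).toReal
  have := min_le_right (f (u + t • z)).toReal (f (u - t • z)).toReal
  rcases abs_cases ⟪β, z⟫ with ⟨habs, -⟩ | ⟨habs, -⟩ <;> rw [habs] <;> linarith

theorem isBounded_sublevel_majorantHeight [FiniteDimensional ℝ E] {V : Submodule ℝ E} {ε : ℝ}
    (hε : 0 < ε) (hball : ∀ z ∈ V, ‖z‖ < ε → f (u + z) ≠ ⊥) (c : ℝ) :
    Bornology.IsBounded ((V : Set E) ∩ {β | majorantHeight f u β ≤ c}) := by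
  set b := stdOrthonormalBasis ℝ V
  set t := ε / 2
  have ht : 0 < t := half_pos hε
  have hsmall : ∀ i, ‖t • (b i : E)‖ < ε := fun i ↦ by
    rw [norm_smul, V.norm_coe, b.orthonormal.1 i, Real.norm_of_nonneg ht.le, mul_one]
    exact half_lt_self hε
  refine (Metric.isBounded_closedBall (x := 0) (r := ∑ i,
    (c - min (f (u + t • (b i : E))).toReal (f (u - t • (b i : E))).toReal) / t)).subset ?_
  rintro β ⟨hβV, hβ⟩
  rw [mem_closedBall_zero_iff]
  calc ‖β‖ = ‖(⟨β, hβV⟩ : V)‖ := rfl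
    _ ≤ ∑ i, |⟪β, (b i : E)⟫| := by
      simpa [real_inner_comm] using b.norm_le_sum_abs_inner ⟨β, hβV⟩
    _ ≤ _ := Finset.sum_le_sum fun i _ ↦ by
      rw [le_div_iff₀ ht, mul_comm]
      refine mul_abs_inner_le_of_majorantHeight_le hβ (hball _ (V.smul_mem t (b i).2)
        (hsmall i)) ?_
      rw [sub_eq_add_neg]
      exact hball _ (V.neg_mem (V.smul_mem t (b i).2)) (by rw [norm_neg]; exact hsmall i)

theorem exists_forall_majorantHeight_le [FiniteDimensional ℝ E]
    (hu : u ∈ intrinsicInterior ℝ {w | f w ≠ ⊥}) :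
    ∃ β, ∀ γ, majorantHeight f u β ≤ majorantHeight f u γ := by
  set V := (affineSpan ℝ {w | f w ≠ ⊥}).direction
  have hdir : ∀ w, f w ≠ ⊥ → w - u ∈ V := fun w hw ↦
    AffineSubspace.vsub_mem_direction (subset_affineSpan ℝ _ hw)
      (subset_affineSpan ℝ _ (intrinsicInterior_subset hu))
  obtain ⟨ε, hε, hball⟩ := exists_forall_add_mem_of_mem_intrinsicInterior hu
  by_cases hfin : ∃ β, majorantHeight f u β < ⊤
  · obtain ⟨β₀, hβ₀⟩ := hfin
    obtain ⟨c, hc, -⟩ := EReal.exists_between_coe_real hβ₀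
    have hK : IsCompact ((V : Set E) ∩ {β | majorantHeight f u β ≤ c}) :=
      Metric.isCompact_of_isClosed_isBounded
        (V.closed_of_finiteDimensional.inter
          (lowerSemicontinuous_majorantHeight.isClosed_preimage _))
        (isBounded_sublevel_majorantHeight hε hball c)
    refine lowerSemicontinuous_majorantHeight.exists_forall_le_of_isCompact hK ⟨β₀, hc⟩
      fun β hβ ↦ ⟨V.starProjection β, ⟨V.starProjection_apply_mem β, ?_⟩, ?_⟩
    · rw [Set.mem_ofPred_eq, majorantHeight_starProjection V hdir]
      exact hβ.le
    · rw [majorantHeight_starProjection V hdir]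
  · push Not at hfin
    exact ⟨0, fun γ ↦ le_top.trans (hfin γ)⟩

end MajorantHeight

theorem concBidual_eq_iInf_majorantHeight {σ : ℕ} {f : EuclideanSpace ℝ (Fin σ) → EReal}
    (htop : ∀ w, f w ≠ ⊤) (u : EuclideanSpace ℝ (Fin σ)) :
    concBidual f u = ⨅ β, majorantHeight f u β := by
  refine iInf_congr fun β ↦ ?_
  rw [concDual, EReal.coe_sub_iInf]
  refine iSup_congr fun w ↦ ?_
  rw [EReal.coe_sub_sub_of_ne_top (htop w), inner_sub_right]

theorem no_supporting_hyperplane_iff_not_concave_at_general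
    (σ : ℕ) (f : EuclideanSpace ℝ (Fin σ) → EReal)
    (htop : ∀ w, f w ≠ ⊤)
    (u : EuclideanSpace ℝ (Fin σ))
    (hu : u ∈ intrinsicInterior ℝ {w | f w ≠ ⊥}) :
    (¬ ∃ β : EuclideanSpace ℝ (Fin σ),
        ∀ v, f v ≤ f u + ((⟪β, v - u⟫ : ℝ) : EReal)) ↔
      f u < concBidual f u := by
  obtain ⟨β₀, hβ₀⟩ := exists_forall_majorantHeight_le hu
  simp_rw [← majorantHeight_le_iff]
  rw [concBidual_eq_iInf_majorantHeight htop, ← not_le, not_iff_not]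
  exact ⟨fun ⟨β, hβ⟩ ↦ (iInf_le _ β).trans hβ, fun h ↦ ⟨β₀, (le_iInf hβ₀).trans h⟩⟩

/-- for `u` in the relative interior of `dom f`, `f` has no
supporting hyperplane at `u` iff `f` is not concave at `u`, i.e. `f(u) < f**(u)`. -/
theorem no_supporting_hyperplane_iff_not_concave_at
    (σ : ℕ) (f : EuclideanSpace ℝ (Fin σ) → EReal)
    (hproper : ∃ w, f w ≠ ⊥) (htop : ∀ w, f w ≠ ⊤)
    (u : EuclideanSpace ℝ (Fin σ))
    (hu : u ∈ intrinsicInterior ℝ {w | f w ≠ ⊥}) :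
    (¬ ∃ β : EuclideanSpace ℝ (Fin σ),
        ∀ v, f v ≤ f u + ((⟪β, v - u⟫ : ℝ) : EReal)) ↔
      f u < concBidual f u :=
  no_supporting_hyperplane_iff_not_concave_at_general σ f htop u hu
end

section
/- Let s : ℝ^σ → ℝ ∪ {-∞} be twice continuously differentiable on an open set K ⊆ dom s, and let u ∈ K. Suppose there exist A ≥ 0 and r > 0 with the closed ball B̄(u,r) ⊆ K such that s(v) < s(u) + ⟨∇s(u), v-u⟩ + A‖v-u‖² for all v ∈ B(u,r), v ≠ u, and suppose the set D(u, ∇s(u), A) = {v ∈ dom s : s(v) ≥ s(u) + ⟨∇s(u), v-u⟩ + A‖v-u‖²} is contained in {v : ‖v-u‖ < b} for some b ∈ (0,∞). Then for any γ > max{A, (-s(u) + ‖∇s(u)‖·b)/r²}, s has a strictly supporting paraboloid at u with parameters (∇s(u), γ): s(v) < s(u) + ⟨∇s(u), v-u⟩ + γ‖v-u‖² for all v ≠ u. -/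
open scoped RealInnerProductSpace

/-- local construction of a strictly supporting paraboloid.  Let `s`
(with values in `[-∞,0]`) be twice continuously differentiable on an open set
`K ⊆ dom s` (via a real representative `sr` with gradient `p = ∇s(u)` at `u ∈ K`).
If `s` satisfies the local strict paraboloid inequality with constant `A ≥ 0` on a
ball `B(u,r)` with `B̄(u,r) ⊆ K`, and the set `D(u,∇s(u),A)` is contained in
`{v : ‖v-u‖ < b}`, then for any `γ > max{A, (-s(u) + ‖∇s(u)‖b)/r²}`, `s` has a
strictly supporting paraboloid at `u` with parameters `(∇s(u), γ)`. -/
theorem strictly_supporting_paraboloid_local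
    (σ : ℕ) (s : EuclideanSpace ℝ (Fin σ) → EReal)
    (hneg : ∀ v, s v ≤ 0)
    (K : Set (EuclideanSpace ℝ (Fin σ))) (hK : IsOpen K)
    (hKdom : K ⊆ {v | s v ≠ ⊥})
    (sr : EuclideanSpace ℝ (Fin σ) → ℝ) (hrepr : ∀ v ∈ K, s v = ((sr v : ℝ) : EReal))
    (hC2 : ContDiffOn ℝ 2 sr K)
    (u : EuclideanSpace ℝ (Fin σ)) (hu : u ∈ K)
    (p : EuclideanSpace ℝ (Fin σ)) (hgrad : HasGradientAt sr p u)
    (su : ℝ) (hsu : s u = ((su : ℝ) : EReal))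
    (A : ℝ) (hA : 0 ≤ A) (r : ℝ) (hr : 0 < r)
    (hball : Metric.closedBall u r ⊆ K)
    (hloc : ∀ v ∈ Metric.ball u r, v ≠ u →
      s v < s u + ((⟪p, v - u⟫ + A * ‖v - u‖ ^ 2 : ℝ) : EReal))
    (b : ℝ) (hb : 0 < b)
    (hDb : ∀ v, s v ≠ ⊥ →
      s u + ((⟪p, v - u⟫ + A * ‖v - u‖ ^ 2 : ℝ) : EReal) ≤ s v → ‖v - u‖ < b)
    (γ : ℝ) (hγ : max A ((-su + ‖p‖ * b) / r ^ 2) < γ) :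
    ∀ v, v ≠ u → s v < s u + ((⟪p, v - u⟫ + γ * ‖v - u‖ ^ 2 : ℝ) : EReal) := by
  intro v hv
  have hAγ : A ≤ γ := le_of_lt (lt_of_le_of_lt (le_max_left _ _) hγ)
  have hγ0 : 0 ≤ γ := hA.trans hAγ
  have hAleγ : s u + ((⟪p, v - u⟫ + A * ‖v - u‖ ^ 2 : ℝ) : EReal)
      ≤ s u + ((⟪p, v - u⟫ + γ * ‖v - u‖ ^ 2 : ℝ) : EReal) := by
    rw [hsu, ← EReal.coe_add, ← EReal.coe_add, EReal.coe_le_coe_iff]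
    nlinarith [sq_nonneg ‖v - u‖]
  by_cases hvr : v ∈ Metric.ball u r
  · exact lt_of_lt_of_le (hloc v hvr hv) hAleγ
  · have hnorm : r ≤ ‖v - u‖ := by
      simpa [Metric.mem_ball, dist_eq_norm, not_lt] using hvr
    by_cases hbot : s v = ⊥
    · rw [hbot, hsu, ← EReal.coe_add]; exact EReal.bot_lt_coe _
    by_cases hvb : ‖v - u‖ < b
    · have hcs : -(‖p‖ * ‖v - u‖) ≤ ⟪p, v - u⟫ :=
        (neg_le_neg (abs_real_inner_le_norm p (v - u))).trans (neg_abs_le _)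
    
      have hγr : -su + ‖p‖ * b < γ * r ^ 2 := by
        have := lt_of_le_of_lt (le_max_right A ((-su + ‖p‖ * b) / r ^ 2)) hγ
        rw [div_lt_iff₀ (by positivity)] at this
        linarith
      have hpos : 0 < su + (⟪p, v - u⟫ + γ * ‖v - u‖ ^ 2) := by
        have hr2 : r ^ 2 ≤ ‖v - u‖ ^ 2 := by nlinarith
        have hp0 : (0:ℝ) ≤ ‖p‖ := norm_nonneg _
        nlinarith [mul_le_mul_of_nonneg_left hr2 hγ0]
      refine lt_of_le_of_lt (hneg v) ?_
      rw [hsu, ← EReal.coe_add, ← EReal.coe_zero, EReal.coe_lt_coe_iff]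
      exact hpos
    · have h2 : s v < s u + ((⟪p, v - u⟫ + A * ‖v - u‖ ^ 2 : ℝ) : EReal) := by
        by_contra h
        push_neg at h
        exact hvb (hDb v hbot h)
      exact lt_of_lt_of_le h2 hAleγ
end
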